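/- arXiv:1011.3069 — 3 statements merged into one kernel-verified Lean document; each statement's English description precedes it below -/
import Mathlib

section
/- Let $c_n$ and $c$ be convex functions on $[0,1]$. Suppose for some $a \in (0,1)$ we have $c_n(a) \to c(a)$, and the sequences $(c_n(0))$ and $(c_n(1))$ are bounded. Then for every sequence $a_n \to a$ in $[0,1]$ we have $c_n(a_n) \to c(a)$. -/
open Filter Set

/-- Lipschitz-type bound for a convex function on `[0,1]` near an interior point. -/
lemma convex_abs_sub_le (f : ℝ → ℝ) (hf : ConvexOn ℝ (Set.Icc (0:ℝ) 1) f)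
    (a : ℝ) (ha : a ∈ Set.Ioo (0:ℝ) 1) (x : ℝ) (hx : x ∈ Set.Icc (0:ℝ) 1)
    (M0 M1 K : ℝ) (h0 : |f 0| ≤ M0) (h1 : |f 1| ≤ M1) (hK : |f a| ≤ K) :
    |f x - f a| ≤ ((M0 + K) / a + (M1 + K) / (1 - a)) * |x - a| := by
  obtain ⟨ha0, ha1⟩ := ha
  have haI : a ∈ Set.Icc (0:ℝ) 1 := ⟨ha0.le, ha1.le⟩
  have hM0 : 0 ≤ M0 := le_trans (abs_nonneg _) h0
  have hM1 : 0 ≤ M1 := le_trans (abs_nonneg _) h1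
  have hKn : 0 ≤ K := le_trans (abs_nonneg _) hK
  have hL0 : 0 ≤ (M0 + K) / a := div_nonneg (by linarith) ha0.le
  have hL1 : 0 ≤ (M1 + K) / (1 - a) := div_nonneg (by linarith) (by linarith)
  rcases eq_or_ne x a with rfl | hxa
  · simp [hL0, hL1]
  have h0I : (0:ℝ) ∈ Set.Icc (0:ℝ) 1 := by norm_num
  have h1I : (1:ℝ) ∈ Set.Icc (0:ℝ) 1 := by norm_num
  have hlow : (f 0 - f a) / (0 - a) ≤ (f x - f a) / (x - a) :=
    hf.secant_mono haI h0I hx (ne_of_lt ha0) hxa hx.1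
  have hhigh : (f x - f a) / (x - a) ≤ (f 1 - f a) / (1 - a) :=
    hf.secant_mono haI hx h1I hxa (ne_of_gt ha1) hx.2
  set s := (f x - f a) / (x - a) with hs
  have e0 : (f 0 - f a) / (0 - a) = (f a - f 0) / a := by
    rw [show (0:ℝ) - a = -a by ring, div_neg]; ring_nf
  rw [e0] at hlow
  have hb0' : |(f a - f 0) / a| ≤ (M0 + K) / a := by
    rw [abs_div, abs_of_pos ha0]
    refine (div_le_div_iff_of_pos_right ha0).mpr ?_
    calc |f a - f 0| ≤ |f a| + |f 0| := by
          simpa [sub_eq_add_neg] using abs_add_le (f a) (-(f 0))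
      _ ≤ M0 + K := by linarith
  have hb1' : |(f 1 - f a) / (1 - a)| ≤ (M1 + K) / (1 - a) := by
    rw [abs_div, abs_of_pos (by linarith : (0:ℝ) < 1 - a)]
    refine (div_le_div_iff_of_pos_right (by linarith)).mpr ?_
    calc |f 1 - f a| ≤ |f 1| + |f a| := by
          simpa [sub_eq_add_neg] using abs_add_le (f 1) (-(f a))
      _ ≤ M1 + K := by linarith
  have hsabs : |s| ≤ (M0 + K) / a + (M1 + K) / (1 - a) := by
    rw [abs_le]
    constructor
    · have h1 := neg_abs_le ((f a - f 0) / a)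
      linarith
    · have h2 := le_abs_self ((f 1 - f a) / (1 - a))
      linarith
  have hfx : f x - f a = s * (x - a) := by
    rw [hs, div_mul_cancel₀ _ (sub_ne_zero.mpr hxa)]
  rw [hfx, abs_mul]
  exact mul_le_mul_of_nonneg_right hsabs (abs_nonneg _)

/-- Convex functions `cₙ, c` on `[0,1]` with `cₙ(a) → c(a)` at an interior point `a`,
`(cₙ(0))` and `(cₙ(1))` bounded, imply `cₙ(aₙ) → c(a)` for any `aₙ → a` in `[0,1]`. -/
theorem convex_seq_tendsto_of_tendsto_at_point
    (c : ℕ → ℝ → ℝ) (clim : ℝ → ℝ)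
    (hconv : ∀ n, ConvexOn ℝ (Set.Icc (0:ℝ) 1) (c n))
    (hconvlim : ConvexOn ℝ (Set.Icc (0:ℝ) 1) clim)
    (a : ℝ) (ha : a ∈ Set.Ioo (0:ℝ) 1)
    (htend : Tendsto (fun n => c n a) atTop (nhds (clim a)))
    (hb0 : ∃ M : ℝ, ∀ n, |c n 0| ≤ M)
    (hb1 : ∃ M : ℝ, ∀ n, |c n 1| ≤ M)
    (an : ℕ → ℝ) (han : ∀ n, an n ∈ Set.Icc (0:ℝ) 1)
    (hana : Tendsto an atTop (nhds a)) :
    Tendsto (fun n => c n (an n)) atTop (nhds (clim a)) := by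
  obtain ⟨M0, hM0⟩ := hb0
  obtain ⟨M1, hM1⟩ := hb1
  -- the sequence `c n a` is bounded
  have habs : Tendsto (fun n => |c n a|) atTop (nhds |clim a|) := htend.abs
  obtain ⟨K, hK⟩ : ∃ K : ℝ, ∀ n, |c n a| ≤ K := by
    obtain ⟨K, hK⟩ := habs.bddAbove_range
    exact ⟨K, fun n => hK ⟨n, rfl⟩⟩
  set L : ℝ := (M0 + K) / a + (M1 + K) / (1 - a) with hL
  have key : ∀ n, |c n (an n) - c n a| ≤ L * |an n - a| := fun n =>
    convex_abs_sub_le (c n) (hconv n) a ha (an n) (han n) M0 M1 K (hM0 n) (hM1 n) (hK n)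
  have hdiff : Tendsto (fun n => c n (an n) - clim a) atTop (nhds 0) := by
    refine squeeze_zero_norm (a := fun n => L * |an n - a| + |c n a - clim a|) (fun n => ?_) ?_
    · calc ‖c n (an n) - clim a‖ = |(c n (an n) - c n a) + (c n a - clim a)| := by
            rw [Real.norm_eq_abs]; ring_nf
      _ ≤ |c n (an n) - c n a| + |c n a - clim a| := abs_add_le _ _
      _ ≤ L * |an n - a| + |c n a - clim a| := by linarith [key n]
    · have h1 : Tendsto (fun n => |an n - a|) atTop (nhds 0) := by
        have := (hana.sub_const a).abs
        simpa using this
      have h2 : Tendsto (fun n => |c n a - clim a|) atTop (nhds 0) := by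
        have := (htend.sub_const (clim a)).abs
        simpa using this
      have := (h1.const_mul L).add h2
      simpa using this
  have := hdiff.add_const (clim a)
  simpa using this
end

section
/- Let $(V_i)$ be i.i.d. uniform on $(0,1)$ and let $L_1 = V_1$, $L_n = V_n \prod_{k<n}(1 - V_k)$ be the uniform stick-breaking process on $[0,1]$. Then for every bounded measurable $h : (0,1) \to \mathbb{R}$, $\mathbb{E}\left(\sum_{i=1}^\infty h(L_i)\right) = \int_0^1 \frac{h(l)}{l}\,dl$, whenever $\int_0^1 |h(l)|/l\,dl < \infty$. -/
open Filter MeasureTheory ProbabilityTheory Set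
open scoped ENNReal NNReal

namespace SBAux

noncomputable def unif : Measure ℝ := volume.restrict (Set.Ioo 0 1)

instance : IsProbabilityMeasure unif := by
  constructor
  simp [unif, Real.volume_Ioo]

noncomputable def ρ (n : ℕ) (l : ℝ) : ℝ := (-Real.log l) ^ n / n.factorial

lemma ρ_meas (n : ℕ) : Measurable (ρ n) := by
  exact (Real.measurable_log.neg.pow_const n).div_const _

lemma ρ_nonneg {n : ℕ} {l : ℝ} (hl : l ∈ Set.Ioo (0:ℝ) 1) : 0 ≤ ρ n l := by
  apply div_nonneg _ (Nat.cast_nonneg _)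
  apply pow_nonneg
  simpa using Real.log_nonpos hl.1.le hl.2.le

lemma tsum_ρ {l : ℝ} (hl : l ∈ Set.Ioo (0:ℝ) 1) : ∑' n, ρ n l = l⁻¹ := by
  have : ∑' n, ρ n l = Real.exp (-Real.log l) := by
    rw [Real.exp_eq_exp_ℝ, NormedSpace.exp_eq_tsum ℝ]
    refine tsum_congr fun n => ?_
    rw [ρ, smul_eq_mul, div_eq_inv_mul]
  rw [this, Real.exp_neg, Real.exp_log hl.1]

lemma summable_ρ (l : ℝ) : Summable (fun n => ρ n l) := Real.summable_pow_div_factorial _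

lemma ρ_le {n : ℕ} {l : ℝ} (hl : l ∈ Set.Ioo (0:ℝ) 1) : ρ n l ≤ l⁻¹ := by
  rw [← tsum_ρ hl]
  exact Summable.le_tsum (summable_ρ l) n (fun m _ => ρ_nonneg hl)

lemma map_one_sub : Measure.map (fun x : ℝ => 1 - x) unif = unif := by
  have hpre : (fun x : ℝ => 1 - x) ⁻¹' (Set.Ioo 0 1) = Set.Ioo 0 1 := by
    ext x
    simp only [Set.mem_preimage, Set.mem_Ioo]
    constructor <;> rintro ⟨a, b⟩ <;> constructor <;> linarith
  have hmeas : Measurable (fun x : ℝ => 1 - x) := by fun_prop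
  have h1 : Measure.map (fun x : ℝ => 1 - x) volume = volume :=
    (Measure.measurePreserving_sub_left volume 1).map_eq
  rw [unif]
  conv_lhs => rw [← hpre]
  rw [← Measure.restrict_map hmeas measurableSet_Ioo, h1]


lemma integral_ρ (n : ℕ) {l : ℝ} (hl : l ∈ Set.Ioo (0:ℝ) 1) :
    ∫ p in Set.Ioo l 1, ρ n p * p⁻¹ = ρ (n + 1) l := by
  have hl1 : l ≤ 1 := hl.2.le
  have hcont : ContinuousOn (fun p : ℝ => ρ n p * p⁻¹) (Set.Icc l 1) := by
    apply ContinuousOn.mul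
    · exact ((Real.continuousOn_log.mono (fun x hx => ne_of_gt (lt_of_lt_of_le hl.1 hx.1))).neg.pow
        n).div_const _
    · exact ContinuousOn.inv₀ continuousOn_id
        (fun x hx => ne_of_gt (lt_of_lt_of_le hl.1 hx.1))
  have hderiv : ∀ p ∈ Set.Icc l 1, p ≠ 0 → HasDerivAt
      (fun p : ℝ => -((-Real.log p) ^ (n + 1) / (n + 1).factorial)) (ρ n p * p⁻¹) p := by
    intro p _ hp
    have h1 : HasDerivAt (fun p : ℝ => -Real.log p) (-p⁻¹) p := (Real.hasDerivAt_log hp).neg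
    have h2 := (h1.pow (n + 1)).div_const ((n + 1).factorial : ℝ)
    have h3 := h2.neg
    refine h3.congr_deriv ?_
    rw [ρ, Nat.factorial_succ]
    have : ((n:ℝ) + 1) ≠ 0 := by positivity
    push_cast
    field_simp
  have key : ∫ p in l..1, ρ n p * p⁻¹ = ρ (n + 1) l := by
    rw [intervalIntegral.integral_eq_sub_of_hasDerivAt (f := fun p : ℝ =>
      -((-Real.log p) ^ (n + 1) / (n + 1).factorial))]
    · simp [ρ]
    · intro p hp
      rw [Set.uIcc_of_le hl1] at hp
      exact hderiv p hp (ne_of_gt (lt_of_lt_of_le hl.1 hp.1))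
    · exact (hcont.mono (by rw [Set.uIcc_of_le hl1])).intervalIntegrable
  rw [← key, intervalIntegral.integral_of_le hl1, ← MeasureTheory.integral_Ioc_eq_integral_Ioo]

lemma lint_ρ (n : ℕ) {l : ℝ} (hl : l ∈ Set.Ioo (0:ℝ) 1) :
    ∫⁻ p in Set.Ioo l 1, ENNReal.ofReal (ρ n p) * ENNReal.ofReal p⁻¹
      = ENNReal.ofReal (ρ (n + 1) l) := by
  have h1 : ∀ p ∈ Set.Ioo l 1, ENNReal.ofReal (ρ n p) * ENNReal.ofReal p⁻¹
      = ENNReal.ofReal (ρ n p * p⁻¹) := by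
    intro p hp
    rw [ENNReal.ofReal_mul (ρ_nonneg ⟨lt_trans hl.1 hp.1, hp.2⟩)]
  rw [setLIntegral_congr_fun measurableSet_Ioo h1]
  rw [← MeasureTheory.ofReal_integral_eq_lintegral_ofReal, integral_ρ n hl]
  · have hcont : ContinuousOn (fun p : ℝ => ρ n p * p⁻¹) (Set.Icc l 1) := by
      apply ContinuousOn.mul
      · exact ((Real.continuousOn_log.mono (fun x hx => ne_of_gt (lt_of_lt_of_le hl.1 hx.1))).neg.pow
          n).div_const _
      · exact ContinuousOn.inv₀ continuousOn_id
          (fun x hx => ne_of_gt (lt_of_lt_of_le hl.1 hx.1))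
    exact (hcont.integrableOn_compact isCompact_Icc).mono_set Set.Ioo_subset_Icc_self
  · filter_upwards [MeasureTheory.self_mem_ae_restrict measurableSet_Ioo] with p hp
    exact mul_nonneg (ρ_nonneg ⟨lt_trans hl.1 hp.1, hp.2⟩) (inv_nonneg.2 (le_of_lt (lt_trans hl.1 hp.1)))


lemma map_mul_unif {Ω : Type*} [MeasurableSpace Ω] (μ : Measure Ω) [IsProbabilityMeasure μ]
    (X U : Ω → ℝ) (hX : Measurable X) (hU : Measurable U)
    (hind : IndepFun X U μ)
    (g : ℝ → ℝ≥0∞) (hg : Measurable g)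
    (hXlaw : Measure.map X μ = unif.withDensity g)
    (hUlaw : Measure.map U μ = unif) :
    Measure.map (fun ω => X ω * U ω) μ
      = unif.withDensity (fun l => ∫⁻ p in Set.Ioo l 1, g p * ENNReal.ofReal p⁻¹) := by
  have hpair : Measure.map (fun ω => (X ω, U ω)) μ = (unif.withDensity g).prod unif := by
    rw [← hXlaw, ← hUlaw]
    exact (indepFun_iff_map_prod_eq_prod_map_map hX.aemeasurable hU.aemeasurable).1 hind
  have hmul : Measurable (fun z : ℝ × ℝ => z.1 * z.2) := measurable_fst.mul measurable_snd
  have hmapeq : Measure.map (fun ω => X ω * U ω) μ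
      = Measure.map (fun z : ℝ × ℝ => z.1 * z.2) ((unif.withDensity g).prod unif) := by
    rw [← hpair, Measure.map_map hmul (hX.prodMk hU)]
    rfl
  rw [hmapeq]
  -- auxiliary function
  set f : ℝ → ℝ≥0∞ := fun p => g p * ENNReal.ofReal p⁻¹ with hf
  have hfmeas : Measurable f := hg.mul (Measurable.ennreal_ofReal (measurable_inv))
  ext s hs
  have hpre : MeasurableSet ((fun z : ℝ × ℝ => z.1 * z.2) ⁻¹' s) := hmul hs
  rw [Measure.map_apply hmul hs, Measure.prod_apply hpre]
  have hsec : Measurable (fun p => unif (Prod.mk p ⁻¹' ((fun z : ℝ × ℝ => z.1 * z.2) ⁻¹' s))) :=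
    measurable_measure_prodMk_left hpre
  rw [lintegral_withDensity_eq_lintegral_mul _ hg hsec]
  -- note base measure is unif
  have LHS_eq : ∫⁻ p, (g * fun p => unif (Prod.mk p ⁻¹' ((fun z : ℝ × ℝ => z.1 * z.2) ⁻¹' s))) p ∂unif
      = ∫⁻ p in Set.Ioo (0:ℝ) 1, f p * volume (s ∩ Set.Ioo 0 p) ∂volume := by
    rw [unif]
    apply setLIntegral_congr_fun measurableSet_Ioo
    intro p hp
    have hp0 : (0:ℝ) < p := hp.1
    have hkey : Prod.mk p ⁻¹' ((fun z : ℝ × ℝ => z.1 * z.2) ⁻¹' s) ∩ Set.Ioo 0 1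
        = (fun u => p * u) ⁻¹' (s ∩ Set.Ioo 0 p) := by
      ext u
      simp only [Set.mem_inter_iff, Set.mem_preimage, Set.mem_Ioo]
      constructor
      · rintro ⟨h1, h2, h3⟩
        exact ⟨h1, mul_pos hp0 h2, by nlinarith⟩
      · rintro ⟨h1, h2, h3⟩
        refine ⟨h1, by nlinarith, by nlinarith⟩
    have : (volume.restrict (Set.Ioo (0:ℝ) 1)) (Prod.mk p ⁻¹' ((fun z : ℝ × ℝ => z.1 * z.2) ⁻¹' s))
        = ENNReal.ofReal p⁻¹ * volume (s ∩ Set.Ioo 0 p) := by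
      rw [Measure.restrict_apply (measurable_prodMk_left hpre), hkey,
        Real.volume_preimage_mul_left (ne_of_gt hp0)]
      congr 1
      rw [abs_of_pos (inv_pos.2 hp0)]
    simp only [Pi.mul_apply, this, hf]
    ring
  rw [LHS_eq]
  -- RHS
  have RHS_eq : (unif.withDensity (fun l => ∫⁻ p in Set.Ioo l 1, f p)) s
      = ∫⁻ p in Set.Ioo (0:ℝ) 1, f p * volume (s ∩ Set.Ioo 0 p) ∂volume := by
    rw [withDensity_apply _ hs, unif, Measure.restrict_restrict hs]
    -- turn into double integral and swap
    have step1 : ∫⁻ l in s ∩ Set.Ioo 0 1, (∫⁻ p in Set.Ioo l 1, f p) ∂volume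
        = ∫⁻ l in s ∩ Set.Ioo 0 1, (∫⁻ p in Set.Ioo (0:ℝ) 1,
            Set.indicator {z : ℝ × ℝ | z.1 < z.2} (fun z => f z.2) (l, p) ∂volume) ∂volume := by
      apply setLIntegral_congr_fun (hs.inter measurableSet_Ioo)
      intro l hl
      have hIoo : Set.Ioo l 1 = Set.Ioo (0:ℝ) 1 ∩ Set.Ioi l := by
        ext p
        simp only [Set.mem_Ioo, Set.mem_inter_iff, Set.mem_Ioi]
        constructor
        · rintro ⟨h1, h2⟩; exact ⟨⟨lt_trans hl.2.1 h1, h2⟩, h1⟩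
        · rintro ⟨⟨h1, h2⟩, h3⟩; exact ⟨h3, h2⟩
      beta_reduce
      rw [hIoo, Set.inter_comm, ← Measure.restrict_restrict measurableSet_Ioi]
      rw [← lintegral_indicator (measurableSet_Ioi)]
      congr 1
    rw [step1]
    have hFmeas : Measurable (Function.uncurry (fun l p =>
        Set.indicator {z : ℝ × ℝ | z.1 < z.2} (fun z => f z.2) (l, p))) := by
      have : Function.uncurry (fun l p =>
          Set.indicator {z : ℝ × ℝ | z.1 < z.2} (fun z => f z.2) (l, p))
          = Set.indicator {z : ℝ × ℝ | z.1 < z.2} (fun z => f z.2) := by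
        ext z; cases z; rfl
      rw [this]
      exact (hfmeas.comp measurable_snd).indicator (measurableSet_lt measurable_fst measurable_snd)
    rw [lintegral_lintegral_swap hFmeas.aemeasurable]
    apply setLIntegral_congr_fun measurableSet_Ioo
    intro p hp
    have hind2 : ∀ l, Set.indicator {z : ℝ × ℝ | z.1 < z.2} (fun z => f z.2) (l, p)
        = Set.indicator (Set.Iio p) (fun _ => f p) l := by
      intro l
      simp only [Set.indicator_apply, Set.mem_Iio, Set.mem_setOf_eq]
    simp_rw [hind2]
    have hset : Set.Iio p ∩ (s ∩ Set.Ioo 0 1) = s ∩ Set.Ioo 0 p := by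
      ext l
      simp only [Set.mem_inter_iff, Set.mem_Ioo, Set.mem_Iio]
      constructor
      · rintro ⟨h4, h1, h2, h3⟩; exact ⟨h1, h2, h4⟩
      · rintro ⟨h1, h2, h3⟩; exact ⟨h3, h1, h2, lt_trans h3 hp.2⟩
    rw [lintegral_indicator measurableSet_Iio, Measure.restrict_restrict measurableSet_Iio,
      hset, setLIntegral_const, mul_comm]
  rw [RHS_eq]

end SBAux

/-- The intensity measure of the uniform stick-breaking point process on `[0,1]`
has density `1/l`: for bounded measurable `h` with `∫ |h(l)|/l dl < ∞`,
`E (∑ᵢ h(Lᵢ)) = ∫₀¹ h(l)/l dl`. -/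
theorem stickBreaking_intensity
    {Ω : Type*} [MeasurableSpace Ω] (μ : Measure Ω) [IsProbabilityMeasure μ]
    (V : ℕ → Ω → ℝ)
    (hmeas : ∀ i, Measurable (V i))
    (hindep : iIndepFun V μ)
    (hunif : ∀ i, Measure.map (V i) μ = volume.restrict (Set.Ioo (0:ℝ) 1))
    (L : ℕ → Ω → ℝ)
    (hL : ∀ n, 1 ≤ n → ∀ ω, L n ω = V n ω * ∏ k ∈ Finset.Ico 1 n, (1 - V k ω))
    (h : ℝ → ℝ) (hhmeas : Measurable h) (hhbdd : ∃ M : ℝ, ∀ l ∈ Set.Ioo (0:ℝ) 1, |h l| ≤ M)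
    (hint : IntegrableOn (fun l => |h l| / l) (Set.Ioo (0:ℝ) 1) volume) :
    ∫ ω, (∑' i : ℕ, h (L (i + 1) ω)) ∂μ = ∫ l in Set.Ioo (0:ℝ) 1, h l / l := by
  classical
  set W : ℕ → Ω → ℝ := fun n ω => ∏ k ∈ Finset.Ico 1 (n + 1), (1 - V k ω) with hWdef
  have hWmeas : ∀ n, Measurable (W n) := fun n =>
    Finset.measurable_prod _ (fun k _ => measurable_const.sub (hmeas k))
  have hLmeas : ∀ n, Measurable (L (n + 1)) := by
    intro n
    have hle : L (n + 1) = fun ω => V (n + 1) ω * W n ω := by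
      funext ω; rw [hL (n + 1) (Nat.le_add_left 1 n) ω]
    rw [hle]
    exact (hmeas _).mul (hWmeas n)
  set U : ℕ → Ω → ℝ := fun k ω => 1 - V k ω with hUdef
  have hUmeas : ∀ k, Measurable (U k) := fun k => measurable_const.sub (hmeas k)
  have hUindep : iIndepFun U μ :=
    hindep.comp (fun _ => fun x : ℝ => 1 - x)
      (fun _ => measurable_const.sub measurable_id)
  have hUlaw : ∀ k, Measure.map (U k) μ = SBAux.unif := by
    intro k
    have hm1 : Measurable (fun x : ℝ => 1 - x) := measurable_const.sub measurable_id
    have h1 : U k = (fun x : ℝ => 1 - x) ∘ V k := rfl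
    rw [h1, ← Measure.map_map hm1 (hmeas k), hunif k]
    exact SBAux.map_one_sub
  have hprod_eq : ∀ n, (∏ k ∈ Finset.Ico 1 (n + 2), U k) = W (n + 1) := by
    intro n; funext ω; simp [hWdef, hUdef]
  have hindWU : ∀ n, IndepFun (W (n + 1)) (U (n + 2)) μ := by
    intro n
    have h2 := hUindep.indepFun_finsetProd_of_notMem hUmeas
      (s := Finset.Ico 1 (n + 2)) (i := n + 2) (by simp)
    rwa [hprod_eq n] at h2
  have hindWV : ∀ n, IndepFun (W (n + 1)) (V (n + 2)) μ := by
    intro n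
    have h2 := (hindWU n).comp (φ := id) (ψ := fun x : ℝ => 1 - x) measurable_id
      (measurable_const.sub measurable_id)
    have h3 : (fun x : ℝ => 1 - x) ∘ U (n + 2) = V (n + 2) := by
      funext ω; simp [hUdef]
    rwa [Function.id_comp, h3] at h2
  have claimW : ∀ n, Measure.map (W (n + 1)) μ
      = SBAux.unif.withDensity (fun l => ENNReal.ofReal (SBAux.ρ n l)) := by
    intro n
    induction n with
    | zero =>
      have hW1 : W 1 = U 1 := by funext ω; simp [hWdef, hUdef]
      have hρ0 : (fun l : ℝ => ENNReal.ofReal (SBAux.ρ 0 l)) = (1 : ℝ → ℝ≥0∞) := by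
        funext l; simp [SBAux.ρ]
      rw [hW1, hUlaw 1, hρ0, withDensity_one]
    | succ n ih =>
      have hWsucc : W (n + 2) = fun ω => W (n + 1) ω * U (n + 2) ω := by
        funext ω
        show ∏ k ∈ Finset.Ico 1 (n + 2 + 1), (1 - V k ω) = _
        rw [Finset.prod_Ico_succ_top (by omega)]
      rw [hWsucc, SBAux.map_mul_unif μ _ _ (hWmeas (n + 1)) (hUmeas (n + 2)) (hindWU n)
        _ ((SBAux.ρ_meas n).ennreal_ofReal) ih (hUlaw (n + 2))]
      apply withDensity_congr_ae
      filter_upwards [ae_restrict_mem measurableSet_Ioo] with l hl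
      exact SBAux.lint_ρ n hl
  have claimL : ∀ n, Measure.map (L (n + 1)) μ
      = SBAux.unif.withDensity (fun l => ENNReal.ofReal (SBAux.ρ n l)) := by
    intro n
    cases n with
    | zero =>
      have hL1 : L 1 = V 1 := by
        funext ω; rw [hL 1 le_rfl ω]; simp
      have hρ0 : (fun l : ℝ => ENNReal.ofReal (SBAux.ρ 0 l)) = (1 : ℝ → ℝ≥0∞) := by
        funext l; simp [SBAux.ρ]
      rw [hL1, hunif 1, hρ0, withDensity_one]
      rfl
    | succ n =>
      have hLe : L (n + 2) = fun ω => W (n + 1) ω * V (n + 2) ω := by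
        funext ω; rw [hL (n + 2) (by omega) ω, mul_comm]
      rw [hLe, SBAux.map_mul_unif μ _ _ (hWmeas (n + 1)) (hmeas (n + 2)) (hindWV n)
        _ ((SBAux.ρ_meas n).ennreal_ofReal) (claimW n) (hunif (n + 2))]
      apply withDensity_congr_ae
      filter_upwards [ae_restrict_mem measurableSet_Ioo] with l hl
      exact SBAux.lint_ρ n hl
  have hnn : Measurable (fun x : ℝ => ((‖h x‖₊ : ℝ≥0) : ℝ≥0∞)) :=
    hhmeas.nnnorm.coe_nnreal_ennreal
  have key1 : ∀ n, ∫ ω, h (L (n + 1) ω) ∂μ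
      = ∫ l in Set.Ioo (0:ℝ) 1, SBAux.ρ n l * h l := by
    intro n
    rw [← integral_map (hLmeas n).aemeasurable hhmeas.aestronglyMeasurable, claimL n]
    have hd : (fun l : ℝ => ENNReal.ofReal (SBAux.ρ n l))
        = fun l : ℝ => (((SBAux.ρ n l).toNNReal : ℝ≥0) : ℝ≥0∞) := rfl
    rw [hd, integral_withDensity_eq_integral_smul ((SBAux.ρ_meas n).real_toNNReal) h]
    apply integral_congr_ae
    filter_upwards [ae_restrict_mem measurableSet_Ioo] with l hl
    rw [NNReal.smul_def, Real.coe_toNNReal _ (SBAux.ρ_nonneg hl), smul_eq_mul]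
  have key2 : ∀ n, ∫⁻ ω, ‖h (L (n + 1) ω)‖₊ ∂μ
      = ∫⁻ l in Set.Ioo (0:ℝ) 1, ENNReal.ofReal (SBAux.ρ n l) * ‖h l‖₊ := by
    intro n
    rw [← lintegral_map hnn (hLmeas n), claimL n,
      lintegral_withDensity_eq_lintegral_mul _ ((SBAux.ρ_meas n).ennreal_ofReal) hnn]
    rfl
  have hmeas3 : ∀ n : ℕ, Measurable (fun l : ℝ =>
      ENNReal.ofReal (SBAux.ρ n l) * ((‖h l‖₊ : ℝ≥0) : ℝ≥0∞)) :=
    fun n => ((SBAux.ρ_meas n).ennreal_ofReal).mul hnn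
  have hsum2 : ∑' n : ℕ, ∫⁻ l in Set.Ioo (0:ℝ) 1, ENNReal.ofReal (SBAux.ρ n l) * ‖h l‖₊
      = ∫⁻ l in Set.Ioo (0:ℝ) 1, ENNReal.ofReal (|h l| / l) := by
    rw [← lintegral_tsum (fun n => (hmeas3 n).aemeasurable)]
    apply lintegral_congr_ae
    filter_upwards [ae_restrict_mem measurableSet_Ioo] with l hl
    rw [ENNReal.tsum_mul_right, ← ENNReal.ofReal_tsum_of_nonneg
      (fun n => SBAux.ρ_nonneg hl) (SBAux.summable_ρ l), SBAux.tsum_ρ hl,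
      ← enorm_eq_nnnorm, Real.enorm_eq_ofReal_abs, ← ENNReal.ofReal_mul (inv_nonneg.2 hl.1.le)]
    congr 1
    rw [div_eq_mul_inv, mul_comm]
  have hsum : ∑' n : ℕ, ∫⁻ ω, ‖h (L (n + 1) ω)‖₊ ∂μ
      = ∫⁻ l in Set.Ioo (0:ℝ) 1, ENNReal.ofReal (|h l| / l) := by
    simp_rw [key2]; exact hsum2
  have hfin : ∫⁻ l in Set.Ioo (0:ℝ) 1, ENNReal.ofReal (|h l| / l) ∂volume ≠ ⊤ := by
    have h1 : ∫⁻ l in Set.Ioo (0:ℝ) 1, ENNReal.ofReal (|h l| / l) ∂volume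
        = ∫⁻ l in Set.Ioo (0:ℝ) 1, ‖|h l| / l‖₊ ∂volume := by
      apply lintegral_congr_ae
      filter_upwards [ae_restrict_mem measurableSet_Ioo] with l hl
      rw [← enorm_eq_nnnorm, Real.enorm_eq_ofReal (div_nonneg (abs_nonneg _) hl.1.le)]
    rw [h1]
    exact ne_of_lt hint.2
  have swap1 : ∫ ω, (∑' i : ℕ, h (L (i + 1) ω)) ∂μ = ∑' i : ℕ, ∫ ω, h (L (i + 1) ω) ∂μ := by
    have hm : ∀ i : ℕ, AEStronglyMeasurable (fun ω => h (L (i + 1) ω)) μ := fun i =>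
      (Measurable.aestronglyMeasurable (fun s hs => (hLmeas i) (hhmeas hs)))
    apply integral_tsum hm
    simp_rw [enorm_eq_nnnorm]; rw [hsum]; exact hfin
  have key3 : ∀ n : ℕ, ∫⁻ l in Set.Ioo (0:ℝ) 1, ‖SBAux.ρ n l * h l‖₊ ∂volume
      = ∫⁻ l in Set.Ioo (0:ℝ) 1, ENNReal.ofReal (SBAux.ρ n l) * ‖h l‖₊ ∂volume := by
    intro n
    apply lintegral_congr_ae
    filter_upwards [ae_restrict_mem measurableSet_Ioo] with l hl
    rw [nnnorm_mul, ENNReal.coe_mul, ← enorm_eq_nnnorm (SBAux.ρ n l), Real.enorm_eq_ofReal (SBAux.ρ_nonneg hl)]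
  have swap2 : ∑' n : ℕ, (∫ l in Set.Ioo (0:ℝ) 1, SBAux.ρ n l * h l)
      = ∫ l in Set.Ioo (0:ℝ) 1, h l / l := by
    rw [← integral_tsum (f := fun n l => SBAux.ρ n l * h l)
      (fun n => ((SBAux.ρ_meas n).mul hhmeas).aestronglyMeasurable.restrict)
      (by simp_rw [enorm_eq_nnnorm, key3]; rw [hsum2]; exact hfin)]
    apply integral_congr_ae
    filter_upwards [ae_restrict_mem measurableSet_Ioo] with l hl
    rw [tsum_mul_right, SBAux.tsum_ρ hl, div_eq_mul_inv, mul_comm]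
  rw [swap1]
  simp_rw [key1]
  exact swap2
end

section
/- Let $(L_i)$ be a uniform stick-breaking sequence on $[0,1]$, and $(Y_i)$ i.i.d. with $\mathbb{P}(Y_1 > 0) > 0$, independent of $(L_i)$. Fix $\gamma \in (0,1)$ and $a > 0$. Then almost surely $Y_i \ge a L_i^{\gamma}$ for infinitely many $i$. -/
open Filter MeasureTheory ProbabilityTheory Set

/-- For a uniform stick-breaking sequence `(Lᵢ)` and an independent i.i.d. sequence
`(Yᵢ)` with `ℙ(Y₁ > 0) > 0`, `γ ∈ (0,1)` and `a > 0`, almost surely `Yᵢ ≥ a Lᵢ^γ` for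
infinitely many `i`. -/
theorem stickBreaking_iid_infinitely_often_above
    {Ω : Type*} [MeasurableSpace Ω] (μ : Measure Ω) [IsProbabilityMeasure μ]
    (V Y : ℕ → Ω → ℝ)
    (hVmeas : ∀ i, Measurable (V i)) (hYmeas : ∀ i, Measurable (Y i))
    -- joint independence of the combined family (V, Y)
    (hindep : iIndepFun
      (fun j => Sum.elim V Y j) μ)
    -- V i.i.d. uniform on (0,1)
    (hVunif : ∀ i, Measure.map (V i) μ = volume.restrict (Set.Ioo (0:ℝ) 1))
    -- Y identically distributed
    (hYid : ∀ i, Measure.map (Y i) μ = Measure.map (Y 0) μ)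
    -- stick-breaking lengths
    (L : ℕ → Ω → ℝ)
    (hL : ∀ n, 1 ≤ n → ∀ ω, L n ω = V n ω * ∏ k ∈ Finset.Ico 1 n, (1 - V k ω))
    (γ : ℝ) (hγ : γ ∈ Set.Ioo (0:ℝ) 1)
    (a : ℝ) (ha : 0 < a)
    (hpos : 0 < μ {ω | 0 < Y 0 ω}) :
    ∀ᵐ ω ∂μ, {i : ℕ | 1 ≤ i ∧ a * (L i ω) ^ γ ≤ Y i ω}.Infinite := by
  classical
  obtain ⟨γpos, γlt⟩ := hγ
  -- choose ε > 0 with μ {Y 0 ≥ ε} > 0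
  have hUnion : {ω | 0 < Y 0 ω} = ⋃ n : ℕ, Y 0 ⁻¹' Set.Ici (((n : ℝ) + 1)⁻¹) := by
    ext ω
    simp only [Set.mem_setOf_eq, Set.mem_iUnion, Set.mem_preimage, Set.mem_Ici]
    constructor
    · intro h
      obtain ⟨n, hn⟩ := exists_nat_gt (Y 0 ω)⁻¹
      refine ⟨n, ?_⟩
      have h1 : (Y 0 ω)⁻¹ < (n : ℝ) + 1 := by linarith
      have := inv_strictAnti₀ (inv_pos.2 h) h1
      rw [inv_inv] at this
      exact this.le
    · rintro ⟨n, hn⟩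
      have : (0 : ℝ) < ((n : ℝ) + 1)⁻¹ := by positivity
      linarith
  obtain ⟨nε, hnε⟩ : ∃ n : ℕ, 0 < μ (Y 0 ⁻¹' Set.Ici (((n : ℝ) + 1)⁻¹)) := by
    by_contra h
    push_neg at h
    have : ∀ n : ℕ, μ (Y 0 ⁻¹' Set.Ici (((n : ℝ) + 1)⁻¹)) = 0 := fun n =>
      le_antisymm (h n) (by simp)
    have h0 : μ {ω | 0 < Y 0 ω} = 0 := by
      rw [hUnion]
      exact measure_iUnion_null this
    exact absurd h0 hpos.ne'
  set ε : ℝ := ((nε : ℝ) + 1)⁻¹ with hεdef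
  have hε : 0 < ε := by positivity
  set p : ENNReal := μ (Y 0 ⁻¹' Set.Ici ε) with hpdef
  have hp : 0 < p := hnε
  -- the threshold c
  set c : ℝ := min ((ε / a) ^ (γ⁻¹)) (1 / 2) with hcdef
  have hc0 : 0 < c := lt_min (Real.rpow_pos_of_pos (div_pos hε ha) _) (by norm_num)
  have hc1 : c < 1 := lt_of_le_of_lt (min_le_right _ _) (by norm_num)
  -- the independent events
  set E : ℕ → Set Ω := fun n => V n ⁻¹' Set.Iic c ∩ Y n ⁻¹' Set.Ici ε with hEdef
  have hEmeas : ∀ n, MeasurableSet (E n) := fun n =>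
    ((hVmeas n) measurableSet_Iic).inter ((hYmeas n) measurableSet_Ici)
  -- the auxiliary sets indexed by ℕ ⊕ ℕ
  set g : ℕ ⊕ ℕ → Set Ω :=
    Sum.elim (fun m => V m ⁻¹' Set.Iic c) (fun m => Y m ⁻¹' Set.Ici ε) with hgdef
  have hmeasg : ∀ j : ℕ ⊕ ℕ,
      MeasurableSet[MeasurableSpace.comap (Sum.elim V Y j) inferInstance] (g j) := by
    rintro (m | m)
    · exact ⟨Set.Iic c, measurableSet_Iic, rfl⟩
    · exact ⟨Set.Ici ε, measurableSet_Ici, rfl⟩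
  -- marginal measures
  have hVc : ∀ m, μ (V m ⁻¹' Set.Iic c) = ENNReal.ofReal c := by
    intro m
    have : μ (V m ⁻¹' Set.Iic c) = (Measure.map (V m) μ) (Set.Iic c) := by
      rw [Measure.map_apply (hVmeas m) measurableSet_Iic]
    rw [this, hVunif m, Measure.restrict_apply measurableSet_Iic]
    have hset : Set.Iic c ∩ Set.Ioo (0 : ℝ) 1 = Set.Ioc 0 c := by
      ext x
      simp only [Set.mem_inter_iff, Set.mem_Iic, Set.mem_Ioo, Set.mem_Ioc]
      constructor
      · rintro ⟨h1, h2, h3⟩; exact ⟨h2, h1⟩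
      · rintro ⟨h1, h2⟩; exact ⟨h2, h1, lt_of_le_of_lt h2 hc1⟩
    rw [hset, Real.volume_Ioc, sub_zero]
  have hYε : ∀ m, μ (Y m ⁻¹' Set.Ici ε) = p := by
    intro m
    have h1 : μ (Y m ⁻¹' Set.Ici ε) = (Measure.map (Y m) μ) (Set.Ici ε) := by
      rw [Measure.map_apply (hYmeas m) measurableSet_Ici]
    have h2 : p = (Measure.map (Y 0) μ) (Set.Ici ε) := by
      rw [Measure.map_apply (hYmeas 0) measurableSet_Ici]
    rw [h1, hYid m, ← h2]
  -- each event factorizes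
  have hEn : ∀ n, μ (E n) = ENNReal.ofReal c * p := by
    intro n
    have hS := hindep.meas_biInter
      (S := ({Sum.inl n, Sum.inr n} : Finset (ℕ ⊕ ℕ))) (s := g) (fun j _ => hmeasg j)
    have hne : (Sum.inl n : ℕ ⊕ ℕ) ∉ ({Sum.inr n} : Finset (ℕ ⊕ ℕ)) := by simp
    rw [Finset.set_biInter_insert, Finset.set_biInter_singleton,
      Finset.prod_insert hne, Finset.prod_singleton] at hS
    have : E n = g (Sum.inl n) ∩ g (Sum.inr n) := rfl
    rw [this, hS]
    simp only [hgdef, Sum.elim_inl, Sum.elim_inr]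
    rw [hVc n, hYε n]
  -- full independence of the events
  have hbig : ∀ s : Finset ℕ, μ (⋂ i ∈ s, E i) = ∏ i ∈ s, μ (E i) := by
    intro s
    set S : Finset (ℕ ⊕ ℕ) := s.image Sum.inl ∪ s.image Sum.inr with hSdef
    have hS := hindep.meas_biInter (S := S) (s := g) (fun j _ => hmeasg j)
    have hset : ⋂ j ∈ S, g j = ⋂ i ∈ s, E i := by
      ext ω
      simp only [Set.mem_iInter, hSdef, Finset.mem_union, Finset.mem_image]
      constructor
      · intro h i hi
        exact ⟨h _ (Or.inl ⟨i, hi, rfl⟩), h _ (Or.inr ⟨i, hi, rfl⟩)⟩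
      · rintro h j (⟨i, hi, rfl⟩ | ⟨i, hi, rfl⟩)
        · exact (h i hi).1
        · exact (h i hi).2
    have hdisj : Disjoint (s.image Sum.inl) (s.image Sum.inr) := by
      simp only [Finset.disjoint_left, Finset.mem_image]
      rintro j ⟨i, _, rfl⟩ ⟨i', _, h⟩
      exact Sum.inl_ne_inr h.symm
    have hprod : ∏ j ∈ S, μ (g j) = ∏ i ∈ s, μ (E i) := by
      rw [hSdef, Finset.prod_union hdisj,
        Finset.prod_image (fun _ _ _ _ h => Sum.inl_injective h),
        Finset.prod_image (fun _ _ _ _ h => Sum.inr_injective h),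
        ← Finset.prod_mul_distrib]
      refine Finset.prod_congr rfl fun i _ => ?_
      simp only [hgdef, Sum.elim_inl, Sum.elim_inr]
      rw [hVc i, hYε i, hEn i]
    rw [← hset, hS, hprod]
  have hindepSet : iIndepSet E μ := (iIndepSet_iff_meas_biInter hEmeas).2 hbig
  -- divergence of the series
  have hsum : (∑' n, μ (E n)) = (⊤ : ENNReal) := by
    have : ∀ n, μ (E n) = ENNReal.ofReal c * p := hEn
    rw [tsum_congr this]
    refine ENNReal.tsum_const_eq_top_of_ne_zero ?_
    refine mul_ne_zero ?_ hp.ne'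
    simpa using (ENNReal.ofReal_pos.2 hc0).ne'
  -- second Borel-Cantelli
  have hlimsup : μ (limsup E atTop) = 1 :=
    measure_limsup_eq_one hEmeas hindepSet hsum
  have hlimsupAE : ∀ᵐ ω ∂μ, ω ∈ limsup E atTop := by
    have hms : MeasurableSet (limsup E atTop) := MeasurableSet.measurableSet_limsup hEmeas
    have : μ (limsup E atTop)ᶜ = 0 := (prob_compl_eq_zero_iff hms).2 hlimsup
    rw [ae_iff]
    exact this
  -- a.s. all V's in (0,1)
  have hV01 : ∀ᵐ ω ∂μ, ∀ k, V k ω ∈ Set.Ioo (0 : ℝ) 1 := by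
    rw [ae_all_iff]
    intro k
    rw [ae_iff]
    have : {ω | ¬ V k ω ∈ Set.Ioo (0:ℝ) 1} = V k ⁻¹' (Set.Ioo (0:ℝ) 1)ᶜ := rfl
    rw [this, ← Measure.map_apply (hVmeas k) measurableSet_Ioo.compl, hVunif k,
      Measure.restrict_apply measurableSet_Ioo.compl, compl_inter_self, measure_empty]
  filter_upwards [hlimsupAE, hV01] with ω hmem hV
  rw [mem_limsup_iff_frequently_mem] at hmem
  have hinf : {n | ω ∈ E n}.Infinite := Nat.frequently_atTop_iff_infinite.mp hmem
  refine Set.Infinite.mono ?_ (hinf.diff (Set.finite_singleton 0))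
  rintro i ⟨hiE, hi0⟩
  have hi1 : 1 ≤ i := Nat.one_le_iff_ne_zero.2 (by simpa using hi0)
  refine ⟨hi1, ?_⟩
  obtain ⟨hVci, hYεi⟩ := hiE
  have hVci' : V i ω ≤ c := hVci
  have hYεi' : ε ≤ Y i ω := hYεi
  -- bound L i ω
  have hprod0 : (0 : ℝ) ≤ ∏ k ∈ Finset.Ico 1 i, (1 - V k ω) :=
    Finset.prod_nonneg fun k _ => by have := (hV k).2; linarith
  have hprod1 : ∏ k ∈ Finset.Ico 1 i, (1 - V k ω) ≤ 1 :=
    Finset.prod_le_one (fun k _ => by have := (hV k).2; linarith)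
      (fun k _ => by have := (hV k).1; linarith)
  have hL0 : 0 ≤ L i ω := by
    rw [hL i hi1 ω]
    exact mul_nonneg (hV i).1.le hprod0
  have hLle : L i ω ≤ c := by
    rw [hL i hi1 ω]
    calc V i ω * ∏ k ∈ Finset.Ico 1 i, (1 - V k ω) ≤ V i ω * 1 :=
          mul_le_mul_of_nonneg_left hprod1 (hV i).1.le
      _ = V i ω := mul_one _
      _ ≤ c := hVci'
  have hcγ : c ^ γ ≤ ε / a := by
    calc c ^ γ ≤ ((ε / a) ^ (γ⁻¹)) ^ γ :=
          Real.rpow_le_rpow hc0.le (min_le_left _ _) γpos.le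
      _ = ε / a := Real.rpow_inv_rpow (div_pos hε ha).le γpos.ne'
  calc a * L i ω ^ γ ≤ a * c ^ γ :=
        mul_le_mul_of_nonneg_left (Real.rpow_le_rpow hL0 hLle γpos.le) ha.le
    _ ≤ a * (ε / a) := mul_le_mul_of_nonneg_left hcγ ha.le
    _ = ε := by rw [mul_comm, div_mul_cancel₀ _ ha.ne']
    _ ≤ Y i ω := hYεi'
end
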